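/- arXiv:1801.06497 — 3 statements merged into one kernel-verified Lean document; each statement's English description precedes it below -/
import Mathlib

section
/- Let ⊑ be a reduction concept on Baire space that extends Turing reducibility and is closed under composition. Then D(≠*) ⊆ D(≤*): if there is y ⊑ x which is equal infinitely often to every basic real, then there is y' ⊑ x which is not eventually dominated by any basic real. -/
/-- Partial functions `ℕ →. ℕ` computable relative to an oracle `O : ℕ → ℕ`
(Turing reducibility, defined as in `Nat.Partrec` with an extra oracle clause). -/
inductive RecursiveInOracle (O : ℕ → ℕ) : (ℕ →. ℕ) → Prop
  | oracle : RecursiveInOracle O (fun n => Part.some (O n))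
  | zero : RecursiveInOracle O (pure 0)
  | succ : RecursiveInOracle O (fun n => Part.some (Nat.succ n))
  | left : RecursiveInOracle O (fun n : ℕ => Part.some n.unpair.1)
  | right : RecursiveInOracle O (fun n : ℕ => Part.some n.unpair.2)
  | pair {f g : ℕ →. ℕ} : RecursiveInOracle O f → RecursiveInOracle O g →
      RecursiveInOracle O (fun n => Nat.pair <$> f n <*> g n)
  | comp {f g : ℕ →. ℕ} : RecursiveInOracle O f → RecursiveInOracle O g →
      RecursiveInOracle O (fun n => g n >>= f)
  | prec {f g : ℕ →. ℕ} : RecursiveInOracle O f → RecursiveInOracle O g →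
      RecursiveInOracle O (Nat.unpaired fun a n =>
        n.rec (f a) fun y IH => do let i ← IH; g (Nat.pair a (Nat.pair y i)))
  | rfind {f : ℕ →. ℕ} : RecursiveInOracle O f →
      RecursiveInOracle O (fun a => Nat.rfind fun n => (fun m => m = 0) <$> f (Nat.pair a n))

/-- Turing reducibility `f ≤ᵀ g` for total functions on `ℕ`. -/
def TuringLE (f g : ℕ → ℕ) : Prop :=
  RecursiveInOracle g (fun n => Part.some (f n))

/-- The constant zero function, the distinguished point `0` of Baire space. -/
def baireZero : ℕ → ℕ := fun _ => 0

section
variable (r : (ℕ → ℕ) → (ℕ → ℕ) → Prop)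

/-- `y` is basic (for the reduction concept `⊑` = `r`) if `y ⊑ 0`. -/
def IsBasic (y : ℕ → ℕ) : Prop := r y baireZero

/-- `f ≤* g` : eventual domination. -/
def EvDom (f g : ℕ → ℕ) : Prop := ∃ N, ∀ n ≥ N, f n ≤ g n

/-- `f ≠* g` : eventual difference. -/
def EvDiff (f g : ℕ → ℕ) : Prop := ∃ N, ∀ n ≥ N, f n ≠ g n

/-- An `h`-slalom: `|σ n| ≤ h n` for all `n`. -/
def IsHSlalom (h : ℕ → ℕ) (σ : ℕ → Finset ℕ) : Prop := ∀ n, (σ n).card ≤ h n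

/-- A slalom: `|σ n| ≤ n` for all `n`. -/
def IsSlalom (σ : ℕ → Finset ℕ) : Prop := ∀ n, (σ n).card ≤ n

/-- The real coding a slalom. -/
def slalomCode (σ : ℕ → Finset ℕ) : ℕ → ℕ := fun n => Encodable.encode (σ n)

/-- `f ∈* σ` : `f` is eventually captured by the slalom `σ`. -/
def EvCapt (f : ℕ → ℕ) (σ : ℕ → Finset ℕ) : Prop := ∃ N, ∀ n ≥ N, f n ∈ σ n

/-- `B(≤*)`: the set of `x` building a real eventually dominating all basic reals. -/
def BLeStar : Set (ℕ → ℕ) := {x | ∃ y, r y x ∧ ∀ z, IsBasic r z → EvDom z y}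

/-- `B(≠*)`: the set of `x` building a real eventually different from all basic reals. -/
def BNeStar : Set (ℕ → ℕ) := {x | ∃ y, r y x ∧ ∀ z, IsBasic r z → EvDiff z y}

/-- `B(∈*)`: the set of `x` building a slalom eventually capturing all basic reals. -/
def BInStar : Set (ℕ → ℕ) :=
  {x | ∃ σ : ℕ → Finset ℕ, IsSlalom σ ∧ r (slalomCode σ) x ∧ ∀ z, IsBasic r z → EvCapt z σ}

/-- `D(≤*)`: the set of `x` building a real not eventually dominated by any basic real. -/
def DLeStar : Set (ℕ → ℕ) := {x | ∃ y, r y x ∧ ∀ z, IsBasic r z → ¬ EvDom y z}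

/-- `D(≠*)`: the set of `x` building a real infinitely often equal to every basic real. -/
def DNeStar : Set (ℕ → ℕ) := {x | ∃ y, r y x ∧ ∀ z, IsBasic r z → ¬ EvDiff y z}

/-- `D(∈*)`: the set of `x` building a real not eventually captured by any basic slalom. -/
def DInStar : Set (ℕ → ℕ) :=
  {x | ∃ y, r y x ∧ ∀ σ : ℕ → Finset ℕ, IsSlalom σ → IsBasic r (slalomCode σ) → ¬ EvCapt y σ}

end

theorem stmt_4 (r : (ℕ → ℕ) → (ℕ → ℕ) → Prop)
    (hrefl : ∀ f, r f f) (htrans : ∀ f g h, r f g → r g h → r f h)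
    (hT : ∀ f g, TuringLE f g → r f g)
    (hcomp : ∀ f g h, r f h → r g h → r (f ∘ g) h) :
    DNeStar r ⊆ DLeStar r := by
  rintro x ⟨y, hyx, hy⟩
  refine ⟨y, hyx, fun z hz hdom => ?_⟩
  have hsucc : IsBasic r (Nat.succ ∘ z) :=
    hcomp _ _ _ (hT _ _ RecursiveInOracle.succ) hz
  obtain ⟨N, hN⟩ := hdom
  exact hy _ hsucc ⟨N, fun n hn => by have := hN n hn; simp [Function.comp]; omega⟩
end

section
/- Let ⊑ be a reduction concept on Baire space that extends Turing reducibility and is closed under composition. Then D(≤*) ⊆ D(∈*): if there is y ⊑ x which is not eventually dominated by any basic real, then there is y' ⊑ x which is not eventually captured by any basic slalom. -/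
open Encodable in
theorem mem_le_encode_list : ∀ {l : List ℕ}, ∀ a ∈ l, a ≤ encode l
  | b :: l, a, h => by
    rw [encode_list_cons]
    rcases List.mem_cons.1 h with rfl | h
    · exact le_of_lt (Nat.lt_succ_of_le (by simpa using Nat.left_le_pair (encode a) (encode l)))
    · exact le_of_lt (Nat.lt_succ_of_le ((mem_le_encode_list a h).trans
        (by simpa using Nat.right_le_pair (encode (b:ℕ)) (encode l))))

open Encodable in
theorem mem_le_encode_multiset (m : Multiset ℕ) (a : ℕ) (h : a ∈ m) : a ≤ encode m := by
  show a ≤ encodeMultiset m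
  unfold encodeMultiset
  refine mem_le_encode_list a ?_
  rw [Multiset.mem_sort]
  exact h

open Encodable in
theorem mem_le_encode_finset (s : Finset ℕ) (a : ℕ) (h : a ∈ s) : a ≤ encode s := by
  have : encode s = encode s.val := rfl
  rw [this]
  exact mem_le_encode_multiset _ _ h

theorem stmt_5 (r : (ℕ → ℕ) → (ℕ → ℕ) → Prop)
    (hrefl : ∀ f, r f f) (htrans : ∀ f g h, r f g → r g h → r f h)
    (hT : ∀ f g, TuringLE f g → r f g)
    (hcomp : ∀ f g h, r f h → r g h → r (f ∘ g) h) :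
    DLeStar r ⊆ DInStar r := by
  rintro x ⟨y, hyx, hy⟩
  refine ⟨y, hyx, fun σ hσ hbasic hcapt => ?_⟩
  obtain ⟨N, hN⟩ := hcapt
  exact hy (slalomCode σ) hbasic ⟨N, fun n hn => mem_le_encode_finset _ _ (hN n hn)⟩
end

section
/- Let ⊑ be a reduction concept on Baire space that extends Turing reducibility and is closed under composition. For any real x, the following are equivalent: (1) there is g ⊑ x such that for every basic f : ℕ → ℕ there are infinitely many n with g n = f n; (2) there is a basic h : ℕ → ℕ and an h-slalom σ with σ ⊑ x such that for every basic f : ℕ → ℕ there are infinitely many n with f n ∈ σ n. In particular, x ∈ D(≠*) if and only if there is a basic h and an h-slalom σ ⊑ x which captures each basic real infinitely often. -/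
namespace Stmt9Aux
open Encodable Denumerable

theorem recIn_of_eq {O : ℕ → ℕ} {f g : ℕ →. ℕ} (h : RecursiveInOracle O f) (e : ∀ n, f n = g n) :
    RecursiveInOracle O g := (funext e : f = g) ▸ h

theorem recIn_of_partrec {O : ℕ → ℕ} {f : ℕ →. ℕ} (h : Nat.Partrec f) : RecursiveInOracle O f := by
  induction h with
  | zero => exact .zero
  | succ => exact .succ
  | left => exact .left
  | right => exact .right
  | pair _ _ ih1 ih2 => exact .pair ih1 ih2
  | comp _ _ ih1 ih2 => exact .comp ih1 ih2
  | prec _ _ ih1 ih2 => exact .prec ih1 ih2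
  | rfind _ ih => exact .rfind ih

theorem tle_of_computable {f : ℕ → ℕ} (h : Computable f) (O : ℕ → ℕ) : TuringLE f O :=
  recIn_of_partrec (Partrec.nat_iff.1 h.partrec)

theorem tle_refl (O : ℕ → ℕ) : TuringLE O O := RecursiveInOracle.oracle

theorem tle_comp {f g O : ℕ → ℕ} (hf : TuringLE f O) (hg : TuringLE g O) :
    TuringLE (fun n => f (g n)) O :=
  recIn_of_eq (RecursiveInOracle.comp hf hg) fun n => by
    simp [Part.bind_eq_bind, Part.bind_some]

theorem tle_pair {f g O : ℕ → ℕ} (hf : TuringLE f O) (hg : TuringLE g O) :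
    TuringLE (fun n => Nat.pair (f n) (g n)) O :=
  recIn_of_eq (RecursiveInOracle.pair hf hg) fun n => by
    simp [Seq.seq]

theorem recIn_trans {F : ℕ →. ℕ} {g O : ℕ → ℕ} (hF : RecursiveInOracle g F) (hg : TuringLE g O) :
    RecursiveInOracle O F := by
  induction hF with
  | oracle => exact hg
  | zero => exact .zero
  | succ => exact .succ
  | left => exact .left
  | right => exact .right
  | pair _ _ ih1 ih2 => exact .pair ih1 ih2
  | comp _ _ ih1 ih2 => exact .comp ih1 ih2
  | prec _ _ ih1 ih2 => exact .prec ih1 ih2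
  | rfind _ ih => exact .rfind ih

theorem primrec_unpair1 : Primrec (fun n : ℕ => n.unpair.1) :=
  Primrec.fst.comp Primrec.unpair

theorem primrec_unpair2 : Primrec (fun n : ℕ => n.unpair.2) :=
  Primrec.snd.comp Primrec.unpair

theorem tle_query {F e : ℕ → ℕ} (hF : Computable F) (he : Computable e) (O : ℕ → ℕ) :
    TuringLE (fun n => F (Nat.pair n (O (e n)))) O :=
  tle_comp (tle_of_computable hF O)
    (tle_pair (tle_of_computable Computable.id O) (tle_comp (tle_refl O) (tle_of_computable he O)))

/-- The course-of-values recursion used in `tle_cv`. -/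
def cvRec (O : ℕ → ℕ) (a : ℕ) : ℕ → Part ℕ := fun m =>
  Nat.rec (motive := fun _ => Part ℕ) (Part.some (Encodable.encode ([O 0] : List ℕ)))
    (fun y IH => IH >>= fun i => Part.some (Encodable.encode
      ((Denumerable.ofNat (List ℕ) (Nat.pair a (Nat.pair y i)).unpair.2.unpair.2) ++
        [O ((Nat.pair a (Nat.pair y i)).unpair.2.unpair.1 + 1)]))) m

theorem cvRec_succ (O : ℕ → ℕ) (a m : ℕ) : cvRec O a (m + 1)
    = cvRec O a m >>= fun i => Part.some (Encodable.encode
      ((Denumerable.ofNat (List ℕ) (Nat.pair a (Nat.pair m i)).unpair.2.unpair.2) ++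
        [O ((Nat.pair a (Nat.pair m i)).unpair.2.unpair.1 + 1)])) := rfl

theorem tle_cv (O : ℕ → ℕ) :
    TuringLE (fun m => Encodable.encode ((List.range (m + 1)).map O)) O := by
  have hf0 : TuringLE (fun _ : ℕ => Encodable.encode ([O 0] : List ℕ)) O := by
    have h := tle_query (F := fun q : ℕ => Encodable.encode ([q.unpair.2] : List ℕ))
      (e := fun _ : ℕ => 0)
      ((Primrec.encode.comp (Primrec.list_cons.comp primrec_unpair2 (Primrec.const []))).to_comp)
      (Computable.const 0) O
    exact recIn_of_eq h fun n => by simp [Nat.unpair_pair]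
  have hg0 : TuringLE (fun p : ℕ =>
      Encodable.encode ((ofNat (List ℕ) p.unpair.2.unpair.2) ++ [O (p.unpair.2.unpair.1 + 1)])) O := by
    have hFc : Computable (fun q : ℕ =>
        Encodable.encode ((ofNat (List ℕ) q.unpair.1.unpair.2.unpair.2) ++ ([q.unpair.2] : List ℕ))) := by
      have h1 : Primrec (fun q : ℕ => ofNat (List ℕ) q.unpair.1.unpair.2.unpair.2) :=
        (Primrec.ofNat _).comp (primrec_unpair2.comp (primrec_unpair2.comp primrec_unpair1))
      have h2 : Primrec (fun q : ℕ => ([q.unpair.2] : List ℕ)) :=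
        Primrec.list_cons.comp primrec_unpair2 (Primrec.const [])
      exact (Primrec.encode.comp (Primrec.list_append.comp h1 h2)).to_comp
    have hec : Computable (fun p : ℕ => p.unpair.2.unpair.1 + 1) :=
      (Primrec.succ.comp (primrec_unpair1.comp primrec_unpair2)).to_comp
    have h := tle_query hFc hec O
    exact recIn_of_eq h fun p => by simp [Nat.unpair_pair]
  have key : ∀ a m : ℕ, cvRec O a m
      = Part.some (Encodable.encode ((List.range (m + 1)).map O)) := by
    intro a m
    induction m with
    | zero => simp [cvRec, List.range_succ]
    | succ m ih =>
        rw [cvRec_succ, ih]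
        simp [Part.bind_eq_bind, Part.bind_some, Nat.unpair_pair, Denumerable.ofNat_encode,
          List.range_succ]
  have hP' : RecursiveInOracle O
      (fun p : ℕ => Part.some (Encodable.encode ((List.range (p.unpair.2 + 1)).map O))) :=
    recIn_of_eq (RecursiveInOracle.prec hf0 hg0) fun p => key p.unpair.1 p.unpair.2
  have h0n : TuringLE (fun n : ℕ => Nat.pair 0 n) O :=
    tle_of_computable ((Primrec₂.natPair.comp (Primrec.const 0) Primrec.id).to_comp) O
  exact recIn_of_eq (RecursiveInOracle.comp hP' h0n) fun n => by
    simp [Part.bind_eq_bind, Part.bind_some, Nat.unpair_pair]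

theorem finset_code (s : Finset ℕ) :
    ∃ l : List ℕ, Encodable.encode s = Encodable.encode l ∧ l.length = s.card ∧
      ∀ v, v ∈ l ↔ v ∈ s := by
  have henc : (Encodable.encode s : ℕ) = Encodable.encode s.val := rfl
  have hm : (↑(Denumerable.ofNat (List ℕ) (Encodable.encode s.val)) : Multiset ℕ) = s.val := by
    have h := Encodable.encodek s.val
    have h2 : Encodable.decode (α := Multiset ℕ) (Encodable.encode s.val)
        = ((↑) : List ℕ → Multiset ℕ) <$> Encodable.decode (α := List ℕ) (Encodable.encode s.val) :=
      rfl
    rw [h2, Denumerable.decode_eq_ofNat] at h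
    simpa using h
  refine ⟨Denumerable.ofNat (List ℕ) (Encodable.encode s), ?_, ?_, ?_⟩
  · rw [henc, Denumerable.encode_ofNat]
  · have : Multiset.card (↑(Denumerable.ofNat (List ℕ) (Encodable.encode s.val)) : Multiset ℕ)
        = s.card := by rw [hm]; rfl
    simpa [henc] using this
  · intro v
    have : v ∈ (↑(Denumerable.ofNat (List ℕ) (Encodable.encode s.val)) : Multiset ℕ) ↔ v ∈ s.val := by
      rw [hm]
    simpa [henc] using this

theorem encode_singleton (v : ℕ) : Encodable.encode ({v} : Finset ℕ) = Nat.pair v 0 + 1 := by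
  obtain ⟨l, he, h1, h2⟩ := finset_code {v}
  rw [Finset.card_singleton] at h1
  obtain ⟨a, rfl⟩ := List.length_eq_one_iff.mp h1
  have hav : a = v := by
    have := (h2 a).mp (by simp)
    simpa using this
  subst hav
  rw [he]
  rfl

/-- The canonical list of elements of the finset coded by `slalomCode σ n`. -/
def sList (σ : ℕ → Finset ℕ) (n : ℕ) : List ℕ :=
  Denumerable.ofNat (List ℕ) (slalomCode σ n)

theorem sList_eq (σ : ℕ → Finset ℕ) (n : ℕ) :
    (sList σ n).length = (σ n).card ∧ ∀ v, v ∈ sList σ n ↔ v ∈ σ n := by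
  obtain ⟨l, he, h1, h2⟩ := finset_code (σ n)
  have hl : sList σ n = l := by
    rw [sList, show slalomCode σ n = Encodable.encode (σ n) from rfl, he,
      Denumerable.ofNat_encode]
  rw [hl]
  exact ⟨h1, h2⟩

/-- Decoder used by the i.o.-equal real built from a slalom. -/
def Fg : ℕ → ℕ := fun q =>
  (ofNat (List ℕ) ((ofNat (List ℕ) q.unpair.2).getD q.unpair.1.unpair.2 0)).getD
    q.unpair.1.unpair.2 0

theorem computable_Fg : Computable Fg := by
  have hA : Primrec (fun q : ℕ => ofNat (List ℕ) q.unpair.2) :=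
    (Primrec.ofNat _).comp primrec_unpair2
  have hj : Primrec (fun q : ℕ => q.unpair.1.unpair.2) :=
    primrec_unpair2.comp primrec_unpair1
  have hB : Primrec (fun q : ℕ => (ofNat (List ℕ) q.unpair.2).getD q.unpair.1.unpair.2 0) :=
    (Primrec.list_getD 0).comp hA hj
  exact ((Primrec.list_getD 0).comp ((Primrec.ofNat _).comp hB) hj).to_comp

/-- The real built from a slalom, infinitely often equal to every basic real. -/
def myG (σ : ℕ → Finset ℕ) : ℕ → ℕ := fun m => Fg (Nat.pair m (slalomCode σ m.unpair.1))

theorem tle_myG (σ : ℕ → Finset ℕ) : TuringLE (myG σ) (slalomCode σ) :=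
  tle_query computable_Fg primrec_unpair1.to_comp (slalomCode σ)

theorem myG_spec (σ : ℕ → Finset ℕ) (n j : ℕ) :
    myG σ (Nat.pair n j) = (ofNat (List ℕ) ((sList σ n).getD j 0)).getD j 0 := by
  simp [myG, Fg, sList, Nat.unpair_pair]

/-- The tuple function: codes of blocks of values of `f`. -/
def fTup (f h : ℕ → ℕ) : ℕ → ℕ := fun n =>
  Encodable.encode ((List.range (h n + 1)).map (fun j => f (Nat.pair n j)))

def F4 : ℕ → ℕ := fun q =>
  Encodable.encode ((List.range (((ofNat (List ℕ) q.unpair.2).getD q.unpair.1 0).unpair.2 + 1)).map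
    (fun j => ((ofNat (List ℕ) q.unpair.2).getD (Nat.pair q.unpair.1 j) 0).unpair.1))

theorem computable_F4 : Computable F4 := by
  have hA : Primrec (fun q : ℕ => ofNat (List ℕ) q.unpair.2) :=
    (Primrec.ofNat _).comp primrec_unpair2
  have hB : Primrec (fun q : ℕ => (ofNat (List ℕ) q.unpair.2).getD q.unpair.1 0) :=
    (Primrec.list_getD 0).comp hA primrec_unpair1
  have hR : Primrec (fun q : ℕ =>
      List.range (((ofNat (List ℕ) q.unpair.2).getD q.unpair.1 0).unpair.2 + 1)) :=
    Primrec.list_range.comp (Primrec.succ.comp (primrec_unpair2.comp hB))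
  have hg2 : Primrec₂ (fun q j : ℕ =>
      ((ofNat (List ℕ) q.unpair.2).getD (Nat.pair q.unpair.1 j) 0).unpair.1) :=
    Primrec.to₂ (primrec_unpair1.comp ((Primrec.list_getD 0).comp (hA.comp Primrec.fst)
      (Primrec₂.natPair.comp (primrec_unpair1.comp Primrec.fst) Primrec.snd)))
  exact (Primrec.encode.comp (Primrec.list_map hR hg2)).to_comp

theorem pair_le_pair_right (a : ℕ) {b₁ b₂ : ℕ} (h : b₁ ≤ b₂) :
    Nat.pair a b₁ ≤ Nat.pair a b₂ := by
  rcases Nat.eq_or_lt_of_le h with rfl | h'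
  · exact le_rfl
  · exact (Nat.pair_lt_pair_right a h').le

theorem getD_range_map (F : ℕ → ℕ) {k i : ℕ} (h : i < k) :
    ((List.range k).map F).getD i 0 = F i := by
  have h' : i < ((List.range k).map F).length := by simpa using h
  rw [List.getD_eq_getElem _ _ h', List.getElem_map, List.getElem_range]

theorem F4_spec (f h : ℕ → ℕ) (n : ℕ) :
    F4 (Nat.pair n (Encodable.encode
      ((List.range (Nat.pair n (h n) + 1)).map (fun k => Nat.pair (f k) (h k))))) = fTup f h n := by
  have hL : ∀ i, i < Nat.pair n (h n) + 1 →
      ((List.range (Nat.pair n (h n) + 1)).map (fun k => Nat.pair (f k) (h k))).getD i 0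
        = Nat.pair (f i) (h i) := fun i hi => getD_range_map _ hi
  unfold F4 fTup
  simp only [Nat.unpair_pair, Denumerable.ofNat_encode]
  rw [hL n (Nat.lt_succ_of_le (Nat.left_le_pair n (h n)))]
  simp only [Nat.unpair_pair]
  congr 1
  refine List.map_congr_left fun j hj => ?_
  rw [List.mem_range] at hj
  rw [hL (Nat.pair n j) (Nat.lt_succ_of_le (pair_le_pair_right n (Nat.lt_succ_iff.mp hj))),
    Nat.unpair_pair]

theorem tle_fTup (f h : ℕ → ℕ) :
    TuringLE (fTup f h) (fun k => Nat.pair (f k) (h k)) := by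
  have hM : TuringLE (fun n => Nat.pair n (h n)) (fun k => Nat.pair (f k) (h k)) := by
    have hq := tle_query (F := fun q : ℕ => Nat.pair q.unpair.1 q.unpair.2.unpair.2)
      (e := fun n : ℕ => n)
      ((Primrec₂.natPair.comp primrec_unpair1 (primrec_unpair2.comp primrec_unpair2)).to_comp)
      Computable.id (fun k => Nat.pair (f k) (h k))
    exact recIn_of_eq hq fun n => by simp [Nat.unpair_pair]
  have hCVM : TuringLE
      (fun n => Encodable.encode ((List.range (Nat.pair n (h n) + 1)).map
        (fun k => Nat.pair (f k) (h k)))) (fun k => Nat.pair (f k) (h k)) :=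
    tle_comp (tle_cv (fun k => Nat.pair (f k) (h k))) hM
  have hW : TuringLE
      (fun n => Nat.pair n (Encodable.encode ((List.range (Nat.pair n (h n) + 1)).map
        (fun k => Nat.pair (f k) (h k))))) (fun k => Nat.pair (f k) (h k)) :=
    tle_pair (tle_of_computable Computable.id _) hCVM
  have hF4W : TuringLE
      (fun n => F4 (Nat.pair n (Encodable.encode ((List.range (Nat.pair n (h n) + 1)).map
        (fun k => Nat.pair (f k) (h k)))))) (fun k => Nat.pair (f k) (h k)) :=
    tle_comp (tle_of_computable computable_F4 _) hW
  exact recIn_of_eq hF4W fun n => congrArg Part.some (F4_spec f h n)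

end Stmt9Aux

theorem stmt_9 (r : (ℕ → ℕ) → (ℕ → ℕ) → Prop)
    (hrefl : ∀ f, r f f) (htrans : ∀ f g h, r f g → r g h → r f h)
    (hT : ∀ f g, TuringLE f g → r f g)
    (hcomp : ∀ f g h, r f h → r g h → r (f ∘ g) h) :
    ∀ x : ℕ → ℕ,
      ((∃ g, r g x ∧ ∀ f, IsBasic r f → ∀ N, ∃ n ≥ N, g n = f n) ↔
        (∃ h, IsBasic r h ∧ ∃ σ : ℕ → Finset ℕ, IsHSlalom h σ ∧ r (slalomCode σ) x ∧
          ∀ f, IsBasic r f → ∀ N, ∃ n ≥ N, f n ∈ σ n)) ∧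
      (x ∈ DNeStar r ↔
        (∃ h, IsBasic r h ∧ ∃ σ : ℕ → Finset ℕ, IsHSlalom h σ ∧ r (slalomCode σ) x ∧
          ∀ f, IsBasic r f → ∀ N, ∃ n ≥ N, f n ∈ σ n)) := by
  intro x
  have rjoin : ∀ u v w : ℕ → ℕ, r u w → r v w → r (fun n => Nat.pair (u n) (v n)) w := by
    intro u v w hu hv
    have h1 : r (fun n => Nat.pair n (v n)) w :=
      htrans _ v w (hT _ v (Stmt9Aux.tle_pair (Stmt9Aux.tle_of_computable Computable.id v)
        (Stmt9Aux.tle_refl v))) hv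
    have h2 : r (fun m => Nat.pair (u m.unpair.1) m.unpair.2) w :=
      htrans _ u w (hT _ u (Stmt9Aux.tle_pair
        (Stmt9Aux.tle_comp (Stmt9Aux.tle_refl u) (Stmt9Aux.tle_of_computable Stmt9Aux.primrec_unpair1.to_comp u))
        (Stmt9Aux.tle_of_computable Stmt9Aux.primrec_unpair2.to_comp u))) hu
    have h3 := hcomp _ _ _ h2 h1
    have he : ((fun m => Nat.pair (u m.unpair.1) m.unpair.2) ∘ (fun n => Nat.pair n (v n)))
        = (fun n => Nat.pair (u n) (v n)) := by
      funext n
      simp [Function.comp, Nat.unpair_pair]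
    rw [he] at h3
    exact h3
  have main : (∃ g, r g x ∧ ∀ f, IsBasic r f → ∀ N, ∃ n ≥ N, g n = f n) ↔
      (∃ h, IsBasic r h ∧ ∃ σ : ℕ → Finset ℕ, IsHSlalom h σ ∧ r (slalomCode σ) x ∧
        ∀ f, IsBasic r f → ∀ N, ∃ n ≥ N, f n ∈ σ n) := by
    constructor
    · rintro ⟨g, hg, hio⟩
      refine ⟨fun _ => 1, hT _ _ (Stmt9Aux.tle_of_computable (Computable.const 1) _),
        fun n => {g n}, fun n => by simp, ?_, ?_⟩
      · have he : slalomCode (fun n => ({g n} : Finset ℕ))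
            = ((fun v => Nat.pair v 0 + 1) ∘ g) := by
          funext n
          simp [slalomCode, Function.comp, Stmt9Aux.encode_singleton]
        rw [he]
        refine hcomp _ _ _ (hT _ _ (Stmt9Aux.tle_of_computable ?_ x)) hg
        exact (Primrec.succ.comp (Primrec₂.natPair.comp Primrec.id (Primrec.const 0))).to_comp
      · intro f hf N
        obtain ⟨n, hn, heq⟩ := hio f hf N
        exact ⟨n, hn, Finset.mem_singleton.mpr heq.symm⟩
    · rintro ⟨h, hb, σ, hσ, hcode, hcap⟩
      refine ⟨Stmt9Aux.myG σ, htrans _ _ _ (hT _ _ (Stmt9Aux.tle_myG σ)) hcode, ?_⟩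
      intro f hf N
      have hJ : r (fun k => Nat.pair (f k) (h k)) baireZero := rjoin f h baireZero hf hb
      have hfb : IsBasic r (Stmt9Aux.fTup f h) :=
        htrans _ _ _ (hT _ _ (Stmt9Aux.tle_fTup f h)) hJ
      obtain ⟨n, hn, hmem⟩ := hcap _ hfb N
      have hmem' : Stmt9Aux.fTup f h n ∈ Stmt9Aux.sList σ n :=
        ((Stmt9Aux.sList_eq σ n).2 _).mpr hmem
      obtain ⟨j, hj, hget⟩ := List.mem_iff_getElem.mp hmem'
      have hjcard : j < (σ n).card := by
        rw [← (Stmt9Aux.sList_eq σ n).1]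
        exact hj
      have hjh : j < h n + 1 := Nat.lt_succ_of_lt (lt_of_lt_of_le hjcard (hσ n))
      refine ⟨Nat.pair n j, le_trans hn (Nat.left_le_pair n j), ?_⟩
      have hgd : (Stmt9Aux.sList σ n).getD j 0 = Stmt9Aux.fTup f h n := by
        rw [List.getD_eq_getElem _ _ hj, hget]
      calc Stmt9Aux.myG σ (Nat.pair n j)
          = (Denumerable.ofNat (List ℕ) (Stmt9Aux.fTup f h n)).getD j 0 := by
            rw [Stmt9Aux.myG_spec, hgd]
        _ = ((List.range (h n + 1)).map (fun j' => f (Nat.pair n j'))).getD j 0 := by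
            rw [show Stmt9Aux.fTup f h n = Encodable.encode
              ((List.range (h n + 1)).map (fun j' => f (Nat.pair n j'))) from rfl,
              Denumerable.ofNat_encode]
        _ = f (Nat.pair n j) := Stmt9Aux.getD_range_map _ hjh
  refine ⟨main, Iff.trans ?_ main⟩
  constructor
  · rintro ⟨y, hy, hall⟩
    refine ⟨y, hy, fun f hf N => ?_⟩
    by_contra hc
    push_neg at hc
    exact hall f hf ⟨N, fun n hn => hc n hn⟩
  · rintro ⟨y, hy, hall⟩
    refine ⟨y, hy, fun z hz hd => ?_⟩
    obtain ⟨N, hN⟩ := hd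
    obtain ⟨n, hn, he⟩ := hall z hz N
    exact hN n hn he
end
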